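/- arXiv:2411.09257 — 2 statements merged into one kernel-verified Lean document; each statement's English description precedes it below -/
import Mathlib

section
/- For each n ∈ ℕ₀, the function t ↦ p̂(n,t) is differentiable on (0,∞) and satisfies d/dt p̂(n,t) = −μ p̂(n,t) + Σ_{j₀=1}^{k₀} μ_{j₀} e^{−j₀λ} Σ_{m=0}^{n} Σ_{(x₁,…,x_k)∈Ω(k,m)} (Π_{j=1}^k (j₀λ_j)^{x_j}/x_j!) p̂(n−m,t), with initial condition p̂(n,0) = 1 if n = 0 and p̂(n,0) = 0 otherwise. -/
/-- GCP state probabilities: `p(n,t) = ∑_{Ω(k,n)} ∏_j ((λ_j t)^{x_j}/x_j!) e^{−λ_j t}`,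
where index `j : Fin k` encodes jump size `j+1`. -/
noncomputable def gcpPmf (k : ℕ) (lam : Fin k → ℝ) (n : ℕ) (t : ℝ) : ℝ :=
  ∑' x : Fin k → ℕ,
    if (∑ j : Fin k, ((j : ℕ) + 1) * x j) = n then
      ∏ j : Fin k, (lam j * t) ^ (x j) / (Nat.factorial (x j)) * Real.exp (-(lam j * t))
    else 0

/-- IGCP state probabilities: `p̂(n,t) = ∑_{s=0}^∞ p(n,s) p₀(s,t)`. -/
noncomputable def igcpPmf (k : ℕ) (lam : Fin k → ℝ) (k0 : ℕ) (mu : Fin k0 → ℝ)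
    (n : ℕ) (t : ℝ) : ℝ :=
  ∑' s : ℕ, gcpPmf k lam n s * gcpPmf k0 mu s t

/-!
Write `wⱼ = j + 1` for the jump sizes and `Λ = ∑ⱼ λⱼ`. The GCP law factors as
`p(n,t) = e^{-Λt} Eₙ(tλ)`, where `Eₙ(u) = ∑_{x ∈ Ω(k,n)} ∏ⱼ uⱼ^{xⱼ}/xⱼ!` is the coefficient of `Xⁿ`
in `∏ⱼ exp(uⱼ X^{wⱼ})`. Differentiating the monomials `t^{|x|}` and lowering one `xⱼ` gives the
forward equation `∂ₜ p(n,t) = -Λ p(n,t) + ∑ⱼ λⱼ p(n - wⱼ, t)`, and `exp((a+b)u) = exp(au) exp(bu)`,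
read coordinatewise as the binomial theorem, gives the semigroup law
`p(n, a+b) = ∑ₘ p(m,a) p(n-m,b)`.

Since `p(n,s)` is `e^{-Λs}` times a polynomial in `s`, the series `∑ₛ p(n,s)` converges, and the
time derivatives of `p₀(s,·)` are bounded by `μ`; so `p̂(n,·)` can be differentiated term by term.
The forward equation of the inner process produces `-μ p̂(n,t)` and, for each `j₀`, the series
`∑ₛ p(n, s + j₀ + 1) p₀(s,t)`, which the semigroup law splits into
`∑ₘ p(m, j₀ + 1) p̂(n - m, t)`.
-/

open Finset Real Nat

section WeightedExp

variable {ι : Type*} [Fintype ι]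

noncomputable def multiExpTerm (u : ι → ℝ) (x : ι → ℕ) : ℝ :=
  ∏ i, u i ^ x i / (x i)!

theorem multiExpTerm_nonneg {u : ι → ℝ} (hu : 0 ≤ u) (x : ι → ℕ) : 0 ≤ multiExpTerm u x :=
  prod_nonneg fun i _ => div_nonneg (pow_nonneg (hu i) _) (Nat.cast_nonneg _)

theorem multiExpTerm_smul (t : ℝ) (u : ι → ℝ) (x : ι → ℕ) :
    multiExpTerm (t • u) x = t ^ (∑ i, x i) * multiExpTerm u x := by
  simp only [multiExpTerm, Pi.smul_apply, smul_eq_mul, mul_pow, mul_div_assoc, prod_mul_distrib,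
    prod_pow_eq_pow_sum]

theorem add_pow_div_factorial {K : Type*} [Field K] [CharZero K] (a b : K) (n : ℕ) :
    (a + b) ^ n / n ! = ∑ p ∈ range (n + 1), a ^ p / p ! * (b ^ (n - p) / (n - p)!) := by
  rw [add_pow, sum_div]
  refine sum_congr rfl fun p hp => ?_
  rw [Nat.cast_choose K (Nat.lt_succ_iff.mp (mem_range.mp hp))]
  have : (n ! : K) ≠ 0 := mod_cast n.factorial_ne_zero
  field_simp

variable [DecidableEq ι]

theorem multiExpTerm_add (u v : ι → ℝ) (x : ι → ℕ) :
    multiExpTerm (u + v) x = ∑ y ∈ Fintype.piFinset fun i => range (x i + 1),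
      multiExpTerm u y * multiExpTerm v (x - y) := by
  simp only [multiExpTerm, Pi.add_apply, add_pow_div_factorial, prod_univ_sum, Pi.sub_apply,
    prod_mul_distrib]

theorem multiExpTerm_add_single_mul (u : ι → ℝ) (y : ι → ℕ) (i : ι) :
    multiExpTerm u (y + Pi.single i 1) * ((y i : ℝ) + 1) = u i * multiExpTerm u y := by
  have hy : y + Pi.single i 1 = Function.update y i (y i + 1) := by
    ext j
    rcases eq_or_ne j i with rfl | hj <;> simp [*]
  simp only [multiExpTerm, hy, Function.apply_update (fun j p => u j ^ p / p !)]
  rw [prod_update_of_mem (mem_univ i), Fintype.prod_eq_mul_prod_compl i, compl_eq_univ_sdiff,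
    Nat.factorial_succ]
  push_cast
  field_simp
  ring

def weightedAntidiag (w : ι → ℕ) (n : ℕ) : Finset (ι → ℕ) :=
  (Fintype.piFinset fun _ => range (n + 1)).filter fun x => ∑ i, w i * x i = n

noncomputable def weightedExpCoeff (w : ι → ℕ) (u : ι → ℝ) (n : ℕ) : ℝ :=
  ∑ x ∈ weightedAntidiag w n, multiExpTerm u x

variable {w : ι → ℕ}

theorem mem_weightedAntidiag (hw : ∀ i, 0 < w i) {n : ℕ} {x : ι → ℕ} :
    x ∈ weightedAntidiag w n ↔ ∑ i, w i * x i = n := by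
  refine ⟨fun h => (mem_filter.1 h).2, fun h => mem_filter.2 ⟨?_, h⟩⟩
  refine Fintype.mem_piFinset.2 fun i => mem_range.2 ?_
  have : w i * x i ≤ n := h ▸ single_le_sum (fun j _ => Nat.zero_le (w j * x j)) (mem_univ i)
  have : x i ≤ w i * x i := Nat.le_mul_of_pos_left _ (hw i)
  omega

theorem tsum_ite_eq_sum_weightedAntidiag {M : Type*} [AddCommMonoid M] [TopologicalSpace M]
    (hw : ∀ i, 0 < w i) (n : ℕ) (f : (ι → ℕ) → M) :
    ∑' x, (if ∑ i, w i * x i = n then f x else 0) = ∑ x ∈ weightedAntidiag w n, f x := by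
  rw [tsum_eq_sum fun x hx => if_neg (mt (mem_weightedAntidiag hw).2 hx)]
  exact sum_congr rfl fun x hx => if_pos ((mem_weightedAntidiag hw).1 hx)

theorem sum_mul_add_single (w x : ι → ℕ) (i : ι) :
    ∑ j, w j * (x j + (Pi.single i 1 : ι → ℕ) j) = ∑ j, w j * x j + w i := by
  simp [mul_add, sum_add_distrib, Pi.single_apply]

theorem sum_weightedAntidiag_apply_mul (hw : ∀ i, 0 < w i) (n : ℕ) (i : ι)
    (f : (ι → ℕ) → ℝ) :
    ∑ x ∈ weightedAntidiag w n, (x i : ℝ) * f x =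
      if w i ≤ n then
        ∑ y ∈ weightedAntidiag w (n - w i), ((y i : ℝ) + 1) * f (y + Pi.single i 1 : ι → ℕ)
      else 0 := by
  -- Over all of `ι → ℕ` the shift `y ↦ y + eᵢ` reindexes the sum without tracking membership.
  have hsupp : Function.support (fun x : ι → ℕ => if ∑ j, w j * x j = n then (x i : ℝ) * f x else 0)
      ⊆ Set.range (· + Pi.single i 1 : (ι → ℕ) → ι → ℕ) := by
    intro x hx
    have hxi : x i ≠ 0 := fun h => hx (by simp [h])
    refine ⟨x - Pi.single i 1, funext fun j => ?_⟩
    rcases eq_or_ne j i with rfl | hj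
    · simp only [Pi.add_apply, Pi.sub_apply, Pi.single_eq_same]
      omega
    · simp [hj]
  rw [← tsum_ite_eq_sum_weightedAntidiag hw, ← (add_left_injective _).tsum_eq hsupp]
  simp only [Pi.add_apply, sum_mul_add_single, Pi.single_eq_same, Nat.cast_add, Nat.cast_one]
  split_ifs with hin
  · rw [← tsum_ite_eq_sum_weightedAntidiag hw]
    exact tsum_congr fun y => if_congr (by omega) rfl rfl
  · exact (tsum_congr fun y => if_neg (by omega)).trans tsum_zero

theorem weightedExpCoeff_nonneg {u : ι → ℝ} (hu : 0 ≤ u) (n : ℕ) : 0 ≤ weightedExpCoeff w u n :=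
  sum_nonneg fun x _ => multiExpTerm_nonneg hu x

theorem weightedExpCoeff_le_exp {u : ι → ℝ} (hu : 0 ≤ u) (n : ℕ) :
    weightedExpCoeff w u n ≤ exp (∑ i, u i) :=
  calc weightedExpCoeff w u n
      ≤ ∑ x ∈ Fintype.piFinset fun _ => range (n + 1), multiExpTerm u x :=
        sum_le_sum_of_subset_of_nonneg (filter_subset _ _) fun x _ _ => multiExpTerm_nonneg hu x
    _ = ∏ i, ∑ p ∈ range (n + 1), u i ^ p / p ! := (prod_univ_sum _ fun i p => u i ^ p / p !).symm
    _ ≤ ∏ i, exp (u i) :=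
        prod_le_prod
          (fun i _ => sum_nonneg fun p _ => div_nonneg (pow_nonneg (hu i) p) p !.cast_nonneg)
          fun i _ => sum_le_exp_of_nonneg (hu i) _
    _ = exp (∑ i, u i) := (exp_sum _ _).symm

theorem weightedExpCoeff_zero (hw : ∀ i, 0 < w i) (n : ℕ) :
    weightedExpCoeff w 0 n = if n = 0 then 1 else 0 := by
  have hterm : ∀ x : ι → ℕ, multiExpTerm 0 x = if x = 0 then 1 else 0 := by
    intro x
    split_ifs with hx
    · simp [hx, multiExpTerm]
    · obtain ⟨i, hi : x i ≠ 0⟩ := Function.ne_iff.1 hx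
      exact prod_eq_zero (mem_univ i) (by simp [hi])
  simp only [weightedExpCoeff, hterm, sum_ite_eq', mem_weightedAntidiag hw]
  simp [eq_comm]

theorem weightedExpCoeff_add (hw : ∀ i, 0 < w i) (u v : ι → ℝ) (n : ℕ) :
    weightedExpCoeff w (u + v) n =
      ∑ m ∈ range (n + 1), weightedExpCoeff w u m * weightedExpCoeff w v (n - m) := by
  simp only [weightedExpCoeff, multiExpTerm_add, sum_mul_sum, ← sum_product']
  rw [sum_sigma', sum_sigma']
  have hsum_add : ∀ y z : ι → ℕ, ∑ i, w i * (y + z) i = ∑ i, w i * y i + ∑ i, w i * z i :=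
    fun y z => by simp only [Pi.add_apply, mul_add, sum_add_distrib]
  refine sum_nbij' (fun p => ⟨∑ i, w i * p.2 i, (p.2, p.1 - p.2)⟩)
    (fun q => ⟨q.2.1 + q.2.2, q.2.1⟩) ?_ ?_ ?_ ?_ (fun _ _ => rfl)
  all_goals simp only [mem_sigma, mem_product, mem_weightedAntidiag hw, Fintype.mem_piFinset,
    mem_range]
  · rintro ⟨x, y⟩ ⟨hx, hyx⟩
    have hyx : y ≤ x := fun i => Nat.lt_succ_iff.1 (hyx i)
    have hsplit := hsum_add y (x - y)
    rw [add_tsub_cancel_of_le hyx] at hsplit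
    dsimp only at hx ⊢
    exact ⟨by omega, trivial, by omega⟩
  · rintro ⟨m, y, z⟩ ⟨hm, hy, hz⟩
    refine ⟨by rw [hsum_add]; omega, fun i => ?_⟩
    simp only [Pi.add_apply]
    omega
  · rintro ⟨x, y⟩ ⟨-, hyx⟩
    have hyx : y ≤ x := fun i => Nat.lt_succ_iff.1 (hyx i)
    simp only [add_tsub_cancel_of_le hyx]
  · rintro ⟨m, y, z⟩ ⟨-, hy, -⟩
    simp only [hy, add_tsub_cancel_left]

theorem hasDerivAt_weightedExpCoeff_smul (hw : ∀ i, 0 < w i) (u : ι → ℝ) (n : ℕ) (t : ℝ) :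
    HasDerivAt (fun s => weightedExpCoeff w (s • u) n)
      (∑ i, u i * if w i ≤ n then weightedExpCoeff w (t • u) (n - w i) else 0) t := by
  have hpoly : (fun s => weightedExpCoeff w (s • u) n) =
      fun s => ∑ x ∈ weightedAntidiag w n, multiExpTerm u x * s ^ ∑ i, x i := by
    ext s
    simp only [weightedExpCoeff, multiExpTerm_smul, mul_comm]
  rw [hpoly]
  refine (HasDerivAt.fun_sum fun x _ =>
    (hasDerivAt_pow (∑ i, x i) t).const_mul (multiExpTerm u x)).congr_deriv ?_
  have hdeg : ∀ i (y : ι → ℕ), ∑ j, (y + Pi.single i 1 : ι → ℕ) j = ∑ j, y j + 1 := by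
    simp [sum_add_distrib]
  symm
  calc ∑ i, u i * (if w i ≤ n then weightedExpCoeff w (t • u) (n - w i) else 0)
      = ∑ i, ∑ x ∈ weightedAntidiag w n,
          (x i : ℝ) * (multiExpTerm u x * t ^ (∑ j, x j - 1)) := by
        refine sum_congr rfl fun i _ => ?_
        rw [sum_weightedAntidiag_apply_mul hw, mul_ite, mul_zero]
        refine if_congr Iff.rfl ?_ rfl
        rw [weightedExpCoeff, mul_sum]
        refine sum_congr rfl fun y _ => ?_
        rw [multiExpTerm_smul, hdeg, Nat.add_sub_cancel]
        linear_combination -(t ^ ∑ j, y j) * multiExpTerm_add_single_mul u y i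
    _ = _ := by
        rw [sum_comm]
        refine sum_congr rfl fun x _ => ?_
        rw [← sum_mul, ← Nat.cast_sum]
        ring

end WeightedExp

section GCP

variable {k : ℕ} {lam : Fin k → ℝ}

theorem gcpPmf_eq (n : ℕ) (t : ℝ) :
    gcpPmf k lam n t =
      weightedExpCoeff (fun j : Fin k => (j : ℕ) + 1) (t • lam) n * exp (-(∑ j, lam j) * t) := by
  have hterm : ∀ x : Fin k → ℕ, ∏ j, (lam j * t) ^ x j / (x j)! * exp (-(lam j * t)) =
      multiExpTerm (t • lam) x * exp (-(∑ j, lam j) * t) := by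
    intro x
    rw [prod_mul_distrib, ← exp_sum, neg_mul, sum_mul, ← sum_neg_distrib]
    simp only [multiExpTerm, Pi.smul_apply, smul_eq_mul, mul_comm t]
  simp only [gcpPmf, hterm, ← ite_zero_mul, tsum_mul_right]
  rw [tsum_ite_eq_sum_weightedAntidiag (fun j => Nat.succ_pos _), weightedExpCoeff]

theorem gcpPmf_eq_exp_mul_tsum (n : ℕ) (c : ℝ) :
    gcpPmf k lam n c = exp (-(c * ∑ j, lam j)) *
      ∑' x : Fin k → ℕ, if ∑ j : Fin k, ((j : ℕ) + 1) * x j = n then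
        ∏ j : Fin k, (c * lam j) ^ x j / (x j)! else 0 := by
  rw [gcpPmf_eq, tsum_ite_eq_sum_weightedAntidiag (fun _ => Nat.succ_pos _), neg_mul, mul_comm,
    mul_comm c]
  rfl

theorem gcpPmf_zero (n : ℕ) : gcpPmf k lam n 0 = if n = 0 then 1 else 0 := by
  rw [gcpPmf_eq, zero_smul, weightedExpCoeff_zero (fun j => Nat.succ_pos _)]
  simp

theorem gcpPmf_nonneg (hlam : 0 ≤ lam) (n : ℕ) {t : ℝ} (ht : 0 ≤ t) : 0 ≤ gcpPmf k lam n t := by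
  rw [gcpPmf_eq]
  exact mul_nonneg (weightedExpCoeff_nonneg (smul_nonneg ht hlam) n) (exp_pos _).le

theorem gcpPmf_le_one (hlam : 0 ≤ lam) (n : ℕ) {t : ℝ} (ht : 0 ≤ t) : gcpPmf k lam n t ≤ 1 := by
  rw [gcpPmf_eq]
  calc _ ≤ exp (∑ j, (t • lam) j) * exp (-(∑ j, lam j) * t) :=
        mul_le_mul_of_nonneg_right (weightedExpCoeff_le_exp (smul_nonneg ht hlam) n) (exp_pos _).le
    _ = 1 := by
        rw [← exp_add, ← exp_zero]
        simp [← mul_sum, mul_comm]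

theorem summable_gcpPmf_natCast (hΛ : 0 < ∑ j, lam j) (n : ℕ) :
    Summable fun s : ℕ => gcpPmf k lam n s := by
  have hr : ‖exp (-∑ j, lam j)‖ < 1 := by
    rw [norm_of_nonneg (exp_pos _).le]
    exact exp_lt_one_iff.2 (neg_lt_zero.2 hΛ)
  have hpoly : (fun s : ℕ => gcpPmf k lam n s) = fun s : ℕ =>
      ∑ x ∈ weightedAntidiag (fun j : Fin k => (j : ℕ) + 1) n,
      multiExpTerm lam x * ((s : ℝ) ^ (∑ j, x j) * exp (-∑ j, lam j) ^ s) := by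
    ext s
    rw [gcpPmf_eq, weightedExpCoeff, sum_mul]
    refine sum_congr rfl fun x _ => ?_
    rw [multiExpTerm_smul, ← exp_nat_mul]
    ring_nf
  rw [hpoly]
  exact summable_sum fun x _ => (summable_pow_mul_geometric_of_norm_lt_one _ hr).mul_left _

theorem gcpPmf_add (n : ℕ) (a b : ℝ) :
    gcpPmf k lam n (a + b) = ∑ m ∈ range (n + 1), gcpPmf k lam m a * gcpPmf k lam (n - m) b := by
  simp only [gcpPmf_eq, add_smul, weightedExpCoeff_add (fun j => Nat.succ_pos _), sum_mul]
  refine sum_congr rfl fun m _ => ?_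
  rw [mul_add, exp_add]
  ring

noncomputable def gcpDeriv (k : ℕ) (lam : Fin k → ℝ) (n : ℕ) (t : ℝ) : ℝ :=
  -(∑ j, lam j) * gcpPmf k lam n t +
    ∑ j : Fin k, lam j * if (j : ℕ) + 1 ≤ n then gcpPmf k lam (n - ((j : ℕ) + 1)) t else 0

theorem hasDerivAt_gcpPmf (n : ℕ) (t : ℝ) :
    HasDerivAt (fun s => gcpPmf k lam n s) (gcpDeriv k lam n t) t := by
  have h := (hasDerivAt_weightedExpCoeff_smul (w := fun j : Fin k => (j : ℕ) + 1)
    (fun _ => Nat.succ_pos _) lam n t).fun_mul ((hasDerivAt_id t).const_mul (-(∑ j, lam j))).exp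
  simp only [id] at h
  simp only [gcpPmf_eq]
  refine h.congr_deriv ?_
  simp only [gcpDeriv, gcpPmf_eq, sum_mul]
  rw [add_comm]
  congr 1
  · ring
  · exact sum_congr rfl fun j _ => by split_ifs <;> ring

theorem ite_gcpPmf_sub_mem_Icc (hlam : 0 ≤ lam) {t : ℝ} (ht : 0 ≤ t) (n c : ℕ) :
    (if c ≤ n then gcpPmf k lam (n - c) t else 0) ∈ Set.Icc 0 1 := by
  split_ifs
  exacts [⟨gcpPmf_nonneg hlam _ ht, gcpPmf_le_one hlam _ ht⟩, ⟨le_rfl, zero_le_one⟩]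

theorem abs_gcpDeriv_le (hlam : 0 ≤ lam) (n : ℕ) {t : ℝ} (ht : 0 ≤ t) :
    |gcpDeriv k lam n t| ≤ ∑ j, lam j := by
  have hJ0 : 0 ≤ ∑ j : Fin k, lam j *
      if (j : ℕ) + 1 ≤ n then gcpPmf k lam (n - ((j : ℕ) + 1)) t else 0 :=
    sum_nonneg fun j _ => mul_nonneg (hlam j) (ite_gcpPmf_sub_mem_Icc hlam ht n _).1
  have hJ1 : ∑ j : Fin k, lam j *
      (if (j : ℕ) + 1 ≤ n then gcpPmf k lam (n - ((j : ℕ) + 1)) t else 0) ≤ ∑ j, lam j :=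
    sum_le_sum fun j _ => mul_le_of_le_one_right (hlam j) (ite_gcpPmf_sub_mem_Icc hlam ht n _).2
  have hΛ : 0 ≤ ∑ j, lam j := sum_nonneg fun j _ => hlam j
  have hp0 := mul_nonneg hΛ (gcpPmf_nonneg hlam n ht)
  have hp1 := mul_le_of_le_one_right hΛ (gcpPmf_le_one hlam n ht)
  rw [gcpDeriv, abs_le]
  constructor <;> linarith

end GCP

section IGCP

variable {k : ℕ} {lam : Fin k → ℝ} {k0 : ℕ} {mu : Fin k0 → ℝ}

theorem igcpPmf_zero (n : ℕ) : igcpPmf k lam k0 mu n 0 = if n = 0 then 1 else 0 := by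
  rw [igcpPmf, tsum_eq_single 0 fun s hs => by rw [gcpPmf_zero, if_neg hs, mul_zero],
    gcpPmf_zero, if_pos rfl, mul_one, Nat.cast_zero, gcpPmf_zero]

theorem summable_gcpPmf_mul_of_mem_Icc (hlam : 0 ≤ lam) (hΛ : 0 < ∑ j, lam j) (n : ℕ)
    {g : ℕ → ℝ} (hg : ∀ s, g s ∈ Set.Icc 0 1) : Summable fun s : ℕ => gcpPmf k lam n s * g s :=
  (summable_gcpPmf_natCast hΛ n).of_nonneg_of_le
    (fun s => mul_nonneg (gcpPmf_nonneg hlam n s.cast_nonneg) (hg s).1)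
    fun s => mul_le_of_le_one_right (gcpPmf_nonneg hlam n s.cast_nonneg) (hg s).2

theorem summable_gcpPmf_mul_gcpPmf (hlam : 0 ≤ lam) (hΛ : 0 < ∑ j, lam j) (hmu : 0 ≤ mu)
    (n : ℕ) {t : ℝ} (ht : 0 ≤ t) : Summable fun s : ℕ => gcpPmf k lam n s * gcpPmf k0 mu s t :=
  summable_gcpPmf_mul_of_mem_Icc hlam hΛ n fun s => ⟨gcpPmf_nonneg hmu s ht, gcpPmf_le_one hmu s ht⟩

theorem hasDerivAt_igcpPmf (hlam : 0 ≤ lam) (hΛ : 0 < ∑ j, lam j) (hmu : 0 ≤ mu) (n : ℕ)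
    {t : ℝ} (ht : 0 < t) :
    HasDerivAt (fun y => igcpPmf k lam k0 mu n y)
      (∑' s : ℕ, gcpPmf k lam n s * gcpDeriv k0 mu s t) t := by
  refine hasDerivAt_tsum_of_isPreconnected ((summable_gcpPmf_natCast hΛ n).mul_right (∑ j, mu j))
    isOpen_Ioi isPreconnected_Ioi (fun s y _ => (hasDerivAt_gcpPmf (lam := mu) s y).const_mul _)
    (fun s y hy => ?_) ht (summable_gcpPmf_mul_gcpPmf hlam hΛ hmu n ht.le) ht
  rw [norm_mul, norm_of_nonneg (gcpPmf_nonneg hlam n s.cast_nonneg)]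
  exact mul_le_mul_of_nonneg_left (abs_gcpDeriv_le hmu s (le_of_lt hy))
    (gcpPmf_nonneg hlam n s.cast_nonneg)

theorem tsum_gcpPmf_mul_ite_sub (hlam : 0 ≤ lam) (hΛ : 0 < ∑ j, lam j) (hmu : 0 ≤ mu)
    (n c : ℕ) {t : ℝ} (ht : 0 ≤ t) :
    ∑' s : ℕ, gcpPmf k lam n s * (if c ≤ s then gcpPmf k0 mu (s - c) t else 0) =
      ∑ m ∈ range (n + 1), gcpPmf k lam m c * igcpPmf k lam k0 mu (n - m) t := by
  have hsupp : Function.support (fun s : ℕ =>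
      gcpPmf k lam n s * if c ≤ s then gcpPmf k0 mu (s - c) t else 0) ⊆ Set.range (· + c) := by
    intro s hs
    have hcs : c ≤ s := by
      by_contra h
      simp [h] at hs
    exact ⟨s - c, Nat.sub_add_cancel hcs⟩
  have hshift : ∀ s : ℕ,
      gcpPmf k lam n ↑(s + c) * (if c ≤ s + c then gcpPmf k0 mu (s + c - c) t else 0) =
        ∑ m ∈ range (n + 1), gcpPmf k lam m c * (gcpPmf k lam (n - m) s * gcpPmf k0 mu s t) := by
    intro s
    rw [if_pos (Nat.le_add_left c s), Nat.add_sub_cancel, Nat.cast_add, add_comm, gcpPmf_add,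
      sum_mul]
    simp only [mul_assoc]
  rw [← (add_left_injective c).tsum_eq hsupp, tsum_congr hshift, Summable.tsum_finsetSum
    fun m _ => (summable_gcpPmf_mul_gcpPmf hlam hΛ hmu (n - m) ht).mul_left _]
  simp only [tsum_mul_left, igcpPmf]

theorem tsum_gcpPmf_mul_gcpDeriv (hlam : 0 ≤ lam) (hΛ : 0 < ∑ j, lam j) (hmu : 0 ≤ mu)
    (n : ℕ) {t : ℝ} (ht : 0 ≤ t) :
    ∑' s : ℕ, gcpPmf k lam n s * gcpDeriv k0 mu s t =
      -(∑ j0, mu j0) * igcpPmf k lam k0 mu n t +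
        ∑ j0 : Fin k0, mu j0 * ∑ m ∈ range (n + 1),
          gcpPmf k lam m ((j0 : ℕ) + 1 : ℕ) * igcpPmf k lam k0 mu (n - m) t := by
  have hjump : ∀ j0 : Fin k0, Summable fun s : ℕ => gcpPmf k lam n s *
      if (j0 : ℕ) + 1 ≤ s then gcpPmf k0 mu (s - ((j0 : ℕ) + 1)) t else 0 := fun j0 =>
    summable_gcpPmf_mul_of_mem_Icc hlam hΛ n fun s => ite_gcpPmf_sub_mem_Icc hmu ht s _
  have hsplit : ∀ s : ℕ, gcpPmf k lam n s * gcpDeriv k0 mu s t =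
      -(∑ j0, mu j0) * (gcpPmf k lam n s * gcpPmf k0 mu s t) + ∑ j0 : Fin k0, mu j0 *
        (gcpPmf k lam n s *
          if (j0 : ℕ) + 1 ≤ s then gcpPmf k0 mu (s - ((j0 : ℕ) + 1)) t else 0) := by
    intro s
    simp only [gcpDeriv, mul_add, mul_sum, mul_left_comm]
  rw [tsum_congr hsplit,
    Summable.tsum_add ((summable_gcpPmf_mul_gcpPmf hlam hΛ hmu n ht).mul_left _)
      (summable_sum fun j0 _ => (hjump j0).mul_left _), tsum_mul_left,
    Summable.tsum_finsetSum fun j0 _ => (hjump j0).mul_left _]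
  simp only [tsum_mul_left, tsum_gcpPmf_mul_ite_sub hlam hΛ hmu n _ ht, igcpPmf]

end IGCP

theorem igcp_de_general (k : ℕ) (hk : 0 < k) (lam : Fin k → ℝ) (hlam : ∀ j, 0 < lam j)
    (k0 : ℕ) (mu : Fin k0 → ℝ) (hmu : ∀ j0, 0 < mu j0) (n : ℕ) :
    (∀ t : ℝ, 0 < t →
      HasDerivAt (fun s : ℝ => igcpPmf k lam k0 mu n s)
        (-(∑ j0 : Fin k0, mu j0) * igcpPmf k lam k0 mu n t +
          ∑ j0 : Fin k0, mu j0 * Real.exp (-(((j0 : ℕ) + 1 : ℝ) * ∑ j : Fin k, lam j)) *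
            ∑ m ∈ Finset.range (n + 1),
              (∑' x : Fin k → ℕ,
                if (∑ j : Fin k, ((j : ℕ) + 1) * x j) = m then
                  ∏ j : Fin k, (((j0 : ℕ) + 1 : ℝ) * lam j) ^ (x j) /
                    (Nat.factorial (x j))
                else 0) *
              igcpPmf k lam k0 mu (n - m) t) t) ∧
    igcpPmf k lam k0 mu n 0 = if n = 0 then 1 else 0 := by
  have hlam' : 0 ≤ lam := fun j => (hlam j).le
  have hΛ : 0 < ∑ j, lam j := sum_pos (fun j _ => hlam j) ⟨⟨0, hk⟩, mem_univ _⟩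
  have hmu' : 0 ≤ mu := fun j0 => (hmu j0).le
  refine ⟨fun t ht => ?_, igcpPmf_zero n⟩
  convert hasDerivAt_igcpPmf hlam' hΛ hmu' n ht using 1
  rw [tsum_gcpPmf_mul_gcpDeriv hlam' hΛ hmu' n ht.le]
  simp only [Nat.cast_add, Nat.cast_one, gcpPmf_eq_exp_mul_tsum, mul_assoc, mul_sum]

/-- the system of difference-differential equations governing the
state probabilities of the IGCP, together with the initial condition. -/
theorem igcp_de (k : ℕ) (hk : 0 < k) (lam : Fin k → ℝ) (hlam : ∀ j, 0 < lam j)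
    (k0 : ℕ) (hk0 : 0 < k0) (mu : Fin k0 → ℝ) (hmu : ∀ j0, 0 < mu j0) (n : ℕ) :
    (∀ t : ℝ, 0 < t →
      HasDerivAt (fun s : ℝ => igcpPmf k lam k0 mu n s)
        (-(∑ j0 : Fin k0, mu j0) * igcpPmf k lam k0 mu n t +
          ∑ j0 : Fin k0, mu j0 * Real.exp (-(((j0 : ℕ) + 1 : ℝ) * ∑ j : Fin k, lam j)) *
            ∑ m ∈ Finset.range (n + 1),
              (∑' x : Fin k → ℕ,
                if (∑ j : Fin k, ((j : ℕ) + 1) * x j) = m then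
                  ∏ j : Fin k, (((j0 : ℕ) + 1 : ℝ) * lam j) ^ (x j) /
                    (Nat.factorial (x j))
                else 0) *
              igcpPmf k lam k0 mu (n - m) t) t) ∧
    igcpPmf k lam k0 mu n 0 = if n = 0 then 1 else 0 :=
  igcp_de_general k hk lam hlam k0 mu hmu n
end

section
/- For all 1 ≤ i, l ≤ q and t ≥ 0, the covariance of the components M_i(M₀(t)) and M_l(M₀(t)) of the multivariate IGCP satisfies C_{il}(t) − e_i(t)·e_l(t) = 𝟙{i=l}·(Σ_{j₀=1}^{k₀} j₀ μ_{j₀} t)·(Σ_{j_i=1}^{k_i} j_i² λ_{ij_i}) + (Σ_{j_i=1}^{k_i} j_i λ_{ij_i})·(Σ_{j_l=1}^{k_l} j_l λ_{lj_l})·(Σ_{j₀=1}^{k₀} j₀² μ_{j₀} t). -/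
open scoped ENNReal NNReal
open Finset MeasureTheory ProbabilityTheory

namespace ENNReal

variable {α : Type*} {k : ℕ}

theorem tsum_pi_prod_eq_prod_tsum (g : Fin k → α → ℝ≥0∞) :
    ∑' x : Fin k → α, ∏ j, g j (x j) = ∏ j, ∑' a, g j a := by
  induction k with
  | zero => simp [tsum_fintype]
  | succ k ih =>
    rw [← (Fin.consEquiv fun _ ↦ α).tsum_eq, ENNReal.tsum_prod', Fin.prod_univ_succ]
    simp only [Fin.consEquiv_apply, Fin.prod_univ_succ, Fin.cons_zero, Fin.cons_succ,
      ENNReal.tsum_mul_left, ih fun j ↦ g j.succ, ENNReal.tsum_mul_right]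

theorem tsum_apply_mul_prod_eq (p : Fin k → α → ℝ≥0∞) (hp : ∀ j, ∑' a, p j a = 1) (j : Fin k)
    (f : α → ℝ≥0∞) :
    ∑' x : Fin k → α, f (x j) * ∏ i, p i (x i) = ∑' a, f a * p j a := by
  have h := tsum_pi_prod_eq_prod_tsum fun i a ↦ (if i = j then f a else 1) * p i a
  simp only [prod_mul_distrib, Fintype.prod_ite_eq'] at h
  rw [h, ← Fintype.prod_ite_eq' j fun _ ↦ ∑' a, f a * p j a]
  refine Fintype.prod_congr _ _ fun i ↦ ?_
  split_ifs with hi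
  · subst hi; rfl
  · simp [hp i]

theorem tsum_apply_mul_apply_mul_prod_eq (p : Fin k → α → ℝ≥0∞) (hp : ∀ j, ∑' a, p j a = 1)
    {j j' : Fin k} (hj : j ≠ j') (f g : α → ℝ≥0∞) :
    ∑' x : Fin k → α, f (x j) * g (x j') * ∏ i, p i (x i) =
      (∑' a, f a * p j a) * ∑' a, g a * p j' a := by
  have h := tsum_pi_prod_eq_prod_tsum fun i a ↦
    (if i = j then f a else if i = j' then g a else 1) * p i a
  have hx : ∀ x : Fin k → α,
      ∏ i, (if i = j then f (x i) else if i = j' then g (x i) else 1) = f (x j) * g (x j') := by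
    intro x
    rw [Fintype.prod_eq_mul j j' hj fun i hi ↦ by simp [hi.1, hi.2]]
    simp [hj.symm]
  simp only [prod_mul_distrib, hx] at h
  rw [h, Fintype.prod_eq_mul j j' hj fun i hi ↦ by simp [hi.1, hi.2, hp i]]
  simp [hj.symm]

theorem hasSum_toReal_of_tsum_eq {f : α → ℝ≥0∞} {a : ℝ≥0∞} (h : ∑' x, f x = a) (ha : a ≠ ∞) :
    HasSum (fun x ↦ (f x).toReal) a.toReal := by
  have hf := ENNReal.hasSum_toReal (h ▸ ha)
  rwa [← ENNReal.tsum_toReal_eq (ENNReal.ne_top_of_tsum_ne_top (h ▸ ha)), h] at hf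

end ENNReal

namespace ProbabilityTheory

variable (r : ℝ≥0)

theorem tsum_poissonMeasure_singleton : ∑' n, poissonMeasure r {n} = 1 := by
  simpa using (lintegral_countable' (μ := poissonMeasure r) 1).symm

theorem natCast_succ_mul_poissonMeasure_singleton_succ (n : ℕ) :
    ((n + 1 : ℕ) : ℝ≥0∞) * poissonMeasure r {n + 1} = r * poissonMeasure r {n} := by
  rw [poissonMeasure_singleton, poissonMeasure_singleton, ← ENNReal.ofReal_natCast,
    ← ENNReal.ofReal_coe_nnreal, ← ENNReal.ofReal_mul (by positivity),
    ← ENNReal.ofReal_mul (by positivity), Nat.factorial_succ]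
  congr 1
  push_cast
  field_simp
  ring

theorem tsum_mul_natCast_mul_poissonMeasure_singleton (f : ℕ → ℝ≥0∞) :
    ∑' n, f n * (n * poissonMeasure r {n}) = r * ∑' n, f (n + 1) * poissonMeasure r {n} := by
  rw [tsum_eq_zero_add' ENNReal.summable, ← ENNReal.tsum_mul_left]
  simp_rw [natCast_succ_mul_poissonMeasure_singleton_succ]
  simp [mul_left_comm]

theorem tsum_natCast_mul_poissonMeasure_singleton :
    ∑' n : ℕ, (n : ℝ≥0∞) * poissonMeasure r {n} = r := by
  simpa [tsum_poissonMeasure_singleton] using tsum_mul_natCast_mul_poissonMeasure_singleton r 1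

theorem tsum_natCast_mul_natCast_mul_poissonMeasure_singleton :
    ∑' n : ℕ, (n : ℝ≥0∞) * n * poissonMeasure r {n} = r * r + r := by
  simp_rw [mul_assoc]
  rw [tsum_mul_natCast_mul_poissonMeasure_singleton]
  simp only [Nat.cast_add, Nat.cast_one, add_mul, one_mul]
  rw [ENNReal.tsum_add, tsum_natCast_mul_poissonMeasure_singleton, tsum_poissonMeasure_singleton]
  ring

end ProbabilityTheory

section PoissonSum

variable {k : ℕ} (w : Fin k → ℕ) (r : Fin k → ℝ≥0)

/-- The law of `∑ j, w j * X j` for independent `X j ∼ Po(r j)`. -/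
noncomputable def poissonSumPmf (n : ℕ) : ℝ≥0∞ :=
  ∑' x : Fin k → ℕ, if ∑ j, w j * x j = n then ∏ j, poissonMeasure (r j) {x j} else 0

theorem tsum_mul_poissonSumPmf (g : ℕ → ℝ≥0∞) :
    ∑' n, g n * poissonSumPmf w r n =
      ∑' x : Fin k → ℕ, g (∑ j, w j * x j) * ∏ j, poissonMeasure (r j) {x j} := by
  simp_rw [poissonSumPmf, ← ENNReal.tsum_mul_left]
  rw [ENNReal.tsum_comm]
  refine tsum_congr fun x ↦ ?_
  rw [tsum_eq_single (∑ j, w j * x j) fun n hn ↦ by simp [Ne.symm hn]]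
  simp

theorem tsum_natCast_mul_prod_poissonMeasure (j : Fin k) :
    ∑' x : Fin k → ℕ, (x j : ℝ≥0∞) * ∏ i, poissonMeasure (r i) {x i} = r j :=
  (ENNReal.tsum_apply_mul_prod_eq _ (fun i ↦ tsum_poissonMeasure_singleton (r i)) j _).trans
    (tsum_natCast_mul_poissonMeasure_singleton _)

theorem tsum_natCast_mul_natCast_mul_prod_poissonMeasure (j j' : Fin k) :
    ∑' x : Fin k → ℕ, (x j : ℝ≥0∞) * x j' * ∏ i, poissonMeasure (r i) {x i} =
      r j * r j' + if j = j' then (r j : ℝ≥0∞) else 0 := by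
  have hp i := tsum_poissonMeasure_singleton (r i)
  split_ifs with hj
  · subst hj
    rw [← tsum_natCast_mul_natCast_mul_poissonMeasure_singleton]
    simpa only [mul_assoc] using ENNReal.tsum_apply_mul_prod_eq _ hp j fun n ↦ (n : ℝ≥0∞) * n
  · rw [ENNReal.tsum_apply_mul_apply_mul_prod_eq _ hp hj, tsum_natCast_mul_poissonMeasure_singleton,
      tsum_natCast_mul_poissonMeasure_singleton, add_zero]

theorem tsum_natCast_mul_poissonSumPmf :
    ∑' n : ℕ, (n : ℝ≥0∞) * poissonSumPmf w r n = ↑(∑ j, (w j : ℝ≥0) * r j) := by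
  rw [tsum_mul_poissonSumPmf]
  simp_rw [Nat.cast_sum, Nat.cast_mul, sum_mul, mul_assoc]
  rw [Summable.tsum_finsetSum fun _ _ ↦ ENNReal.summable]
  simp_rw [ENNReal.tsum_mul_left, tsum_natCast_mul_prod_poissonMeasure]
  push_cast
  rfl

theorem tsum_natCast_sq_mul_poissonSumPmf :
    ∑' n : ℕ, (n : ℝ≥0∞) ^ 2 * poissonSumPmf w r n =
      ↑(∑ j, (w j : ℝ≥0) ^ 2 * r j + (∑ j, (w j : ℝ≥0) * r j) ^ 2) := by
  rw [tsum_mul_poissonSumPmf]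
  have hsq : ∀ x : Fin k → ℕ, ((∑ j, w j * x j : ℕ) : ℝ≥0∞) ^ 2 =
      ∑ j, ∑ j', (w j * w j' : ℝ≥0∞) * (x j * x j') := by
    intro x
    simp only [sq, Nat.cast_sum, Nat.cast_mul, sum_mul_sum]
    exact sum_congr rfl fun _ _ ↦ sum_congr rfl fun _ _ ↦ by ring
  simp_rw [hsq, sum_mul, mul_assoc]
  rw [Summable.tsum_finsetSum fun _ _ ↦ ENNReal.summable]
  simp_rw [Summable.tsum_finsetSum fun _ _ ↦ ENNReal.summable, ENNReal.tsum_mul_left, ← mul_assoc,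
    tsum_natCast_mul_natCast_mul_prod_poissonMeasure]
  push_cast
  simp only [mul_add, mul_ite, mul_zero, sum_add_distrib, sum_ite_eq, mem_univ, if_true, sq,
    sum_mul_sum]
  rw [add_comm]
  congr 1
  exact sum_congr rfl fun _ _ ↦ sum_congr rfl fun _ _ ↦ mul_mul_mul_comm ..

end PoissonSum

section GCP

variable {k : ℕ} {lam : Fin k → ℝ} {t : ℝ}

theorem gcpPmf_eq_toReal_poissonSumPmf (hlam : ∀ j, 0 ≤ lam j) (ht : 0 ≤ t) (n : ℕ) :
    gcpPmf k lam n t =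
      (poissonSumPmf (fun j ↦ j + 1) (fun j ↦ (lam j * t).toNNReal) n).toReal := by
  rw [poissonSumPmf, ENNReal.tsum_toReal_eq fun x ↦ by
    split_ifs <;> simp [ENNReal.prod_ne_top, measure_ne_top]]
  refine tsum_congr fun x ↦ ?_
  split_ifs
  · rw [ENNReal.toReal_prod]
    refine prod_congr rfl fun j _ ↦ ?_
    rw [← measureReal_def, poissonMeasure_real_singleton,
      Real.coe_toNNReal _ (mul_nonneg (hlam j) ht)]
    ring
  · rfl

theorem hasSum_natCast_mul_gcpPmf (hlam : ∀ j, 0 ≤ lam j) (ht : 0 ≤ t) :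
    HasSum (fun n : ℕ ↦ (n : ℝ) * gcpPmf k lam n t)
      ((∑ j : Fin k, ((j : ℕ) + 1 : ℝ) * lam j) * t) := by
  convert ENNReal.hasSum_toReal_of_tsum_eq (tsum_natCast_mul_poissonSumPmf (fun j ↦ j + 1)
    fun j ↦ (lam j * t).toNNReal) ENNReal.coe_ne_top using 1
  · simp [gcpPmf_eq_toReal_poissonSumPmf hlam ht]
  · rw [ENNReal.coe_toReal]
    push_cast [Real.coe_toNNReal _ (mul_nonneg (hlam _) ht)]
    simp only [sum_mul, mul_assoc]

theorem hasSum_natCast_sq_mul_gcpPmf (hlam : ∀ j, 0 ≤ lam j) (ht : 0 ≤ t) :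
    HasSum (fun n : ℕ ↦ (n : ℝ) ^ 2 * gcpPmf k lam n t)
      ((∑ j : Fin k, ((j : ℕ) + 1 : ℝ) ^ 2 * lam j) * t +
        ((∑ j : Fin k, ((j : ℕ) + 1 : ℝ) * lam j) * t) ^ 2) := by
  convert ENNReal.hasSum_toReal_of_tsum_eq (tsum_natCast_sq_mul_poissonSumPmf (fun j ↦ j + 1)
    fun j ↦ (lam j * t).toNNReal) ENNReal.coe_ne_top using 1
  · simp [gcpPmf_eq_toReal_poissonSumPmf hlam ht]
  · rw [ENNReal.coe_toReal]
    push_cast [Real.coe_toNNReal _ (mul_nonneg (hlam _) ht)]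
    simp only [sum_mul, mul_assoc]

end GCP

theorem mvIgcp_cov_general (q : ℕ) (K : Fin q → ℕ)
    (L : (i : Fin q) → Fin (K i) → ℝ) (hL : ∀ i j, 0 < L i j)
    (k0 : ℕ) (mu : Fin k0 → ℝ) (hmu : ∀ j0, 0 < mu j0)
    (i l : Fin q) (t : ℝ) (ht : 0 ≤ t) :
    (if i = l then
        ∑' m : ℕ, gcpPmf k0 mu m t * ∑' a : ℕ, (a : ℝ) ^ 2 * gcpPmf (K i) (L i) a m
      else
        ∑' m : ℕ, gcpPmf k0 mu m t *
          ((∑' a : ℕ, (a : ℝ) * gcpPmf (K i) (L i) a m) *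
            (∑' b : ℕ, (b : ℝ) * gcpPmf (K l) (L l) b m))) -
      (∑' m : ℕ, gcpPmf k0 mu m t * ∑' a : ℕ, (a : ℝ) * gcpPmf (K i) (L i) a m) *
      (∑' m : ℕ, gcpPmf k0 mu m t * ∑' a : ℕ, (a : ℝ) * gcpPmf (K l) (L l) a m) =
    (if i = l then
        (∑ j0 : Fin k0, ((j0 : ℕ) + 1 : ℝ) * mu j0 * t) *
          (∑ j : Fin (K i), ((j : ℕ) + 1 : ℝ) ^ 2 * L i j)
      else 0) +
      (∑ j : Fin (K i), ((j : ℕ) + 1 : ℝ) * L i j) *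
        (∑ j : Fin (K l), ((j : ℕ) + 1 : ℝ) * L l j) *
        (∑ j0 : Fin k0, ((j0 : ℕ) + 1 : ℝ) ^ 2 * mu j0 * t) := by
  have inner_mean (i : Fin q) (m : ℕ) :=
    (hasSum_natCast_mul_gcpPmf (fun j ↦ (hL i j).le) m.cast_nonneg).tsum_eq
  have inner_sq (m : ℕ) :=
    (hasSum_natCast_sq_mul_gcpPmf (fun j ↦ (hL i j).le) m.cast_nonneg).tsum_eq
  simp only [inner_mean, inner_sq, ← sum_mul]
  have outer_mean := hasSum_natCast_mul_gcpPmf (fun j ↦ (hmu j).le) ht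
  have outer_sq := hasSum_natCast_sq_mul_gcpPmf (fun j ↦ (hmu j).le) ht
  generalize (∑ j0 : Fin k0, ((j0 : ℕ) + 1 : ℝ) * mu j0) * t = E at outer_mean outer_sq ⊢
  generalize (∑ j0 : Fin k0, ((j0 : ℕ) + 1 : ℝ) ^ 2 * mu j0) * t = V at outer_sq ⊢
  have outer_lin (c : ℝ) : ∑' m : ℕ, gcpPmf k0 mu m t * (c * m) = c * E := by
    rw [← (outer_mean.mul_left c).tsum_eq]
    exact tsum_congr fun m ↦ by ring
  have outer_prod (c₁ c₂ : ℝ) :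
      ∑' m : ℕ, gcpPmf k0 mu m t * (c₁ * m * (c₂ * m)) = c₁ * c₂ * (V + E ^ 2) := by
    rw [← (outer_sq.mul_left (c₁ * c₂)).tsum_eq]
    exact tsum_congr fun m ↦ by ring
  have outer_quad (c₁ c₂ : ℝ) :
      ∑' m : ℕ, gcpPmf k0 mu m t * (c₁ * m + (c₂ * m) ^ 2) = c₁ * E + c₂ ^ 2 * (V + E ^ 2) := by
    rw [← ((outer_mean.mul_left c₁).add (outer_sq.mul_left (c₂ ^ 2))).tsum_eq]
    exact tsum_congr fun m ↦ by ring
  split_ifs with hil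
  · subst hil
    rw [outer_quad, outer_lin]
    ring
  · rw [outer_prod, outer_lin, outer_lin]
    ring

/-- the covariance of two components `M_i(M₀(t))` and `M_l(M₀(t))` of the
multivariate IGCP.  `C_{il}(t)` is their mixed second moment and `e_i(t)` the mean of
the `i`-th component. -/
theorem mvIgcp_cov (q : ℕ) (hq : 0 < q) (K : Fin q → ℕ) (hK : ∀ i, 0 < K i)
    (L : (i : Fin q) → Fin (K i) → ℝ) (hL : ∀ i j, 0 < L i j)
    (k0 : ℕ) (hk0 : 0 < k0) (mu : Fin k0 → ℝ) (hmu : ∀ j0, 0 < mu j0)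
    (i l : Fin q) (t : ℝ) (ht : 0 ≤ t) :
    (if i = l then
        ∑' m : ℕ, gcpPmf k0 mu m t * ∑' a : ℕ, (a : ℝ) ^ 2 * gcpPmf (K i) (L i) a m
      else
        ∑' m : ℕ, gcpPmf k0 mu m t *
          ((∑' a : ℕ, (a : ℝ) * gcpPmf (K i) (L i) a m) *
            (∑' b : ℕ, (b : ℝ) * gcpPmf (K l) (L l) b m))) -
      (∑' m : ℕ, gcpPmf k0 mu m t * ∑' a : ℕ, (a : ℝ) * gcpPmf (K i) (L i) a m) *
      (∑' m : ℕ, gcpPmf k0 mu m t * ∑' a : ℕ, (a : ℝ) * gcpPmf (K l) (L l) a m) =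
    (if i = l then
        (∑ j0 : Fin k0, ((j0 : ℕ) + 1 : ℝ) * mu j0 * t) *
          (∑ j : Fin (K i), ((j : ℕ) + 1 : ℝ) ^ 2 * L i j)
      else 0) +
      (∑ j : Fin (K i), ((j : ℕ) + 1 : ℝ) * L i j) *
        (∑ j : Fin (K l), ((j : ℕ) + 1 : ℝ) * L l j) *
        (∑ j0 : Fin k0, ((j0 : ℕ) + 1 : ℝ) ^ 2 * mu j0 * t) :=
  mvIgcp_cov_general q K L hL k0 mu hmu i l t ht
end
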